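/- arXiv:2512.07120 — 2 statements merged into one kernel-verified Lean document; each statement's English description precedes it below -/
import Mathlib

section
/- Define a_{m,t} = binomial(m−t, t−1) + 2·binomial(m−t−1, t−1) + binomial(m−t−2, t−1) for integers m ≥ 1 and 1 ≤ t ≤ m (with binomial(u,v) = 0 when u < v or u < 0). Then for m ≥ 2, the sum of a_{m,t} over t from 1 to m equals the Fibonacci number F_{m+2}. -/
/-- Binomial coefficient on integer arguments, vanishing when either argument
is negative (in particular when the upper index is negative) or when the lower
index exceeds the upper index. -/
def ibinom (u v : ℤ) : ℤ :=
  if 0 ≤ u ∧ 0 ≤ v then (u.toNat.choose v.toNat : ℤ) else 0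

/-- `a_{m,t} = C(m-t, t-1) + 2·C(m-t-1, t-1) + C(m-t-2, t-1)`. -/
def aCoeff (m t : ℤ) : ℤ :=
  ibinom (m - t) (t - 1) + 2 * ibinom (m - t - 1) (t - 1) + ibinom (m - t - 2) (t - 1)

lemma ibinom_natCast (a b : ℕ) : ibinom (a : ℤ) (b : ℤ) = (a.choose b : ℤ) := by
  simp [ibinom]

lemma ibinom_neg {u : ℤ} (h : u < 0) (v : ℤ) : ibinom u v = 0 := by
  simp [ibinom, not_le.2 h]

lemma fib_sum (n : ℕ) :
    (Nat.fib (n + 1) : ℤ) = ∑ i ∈ Finset.range (n + 1), ((n - i).choose i : ℤ) := by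
  rw [Nat.fib_succ_eq_sum_choose, Finset.Nat.sum_antidiagonal_eq_sum_range_succ_mk]
  rw [← Finset.sum_range_reflect]
  push_cast
  refine Finset.sum_congr rfl fun i hi => ?_
  rw [Finset.mem_range] at hi
  have h1 : n - (n - i) = i := by omega
  rw [h1]

lemma sum_ibinom (n N : ℕ) (hN : n + 1 ≤ N) :
    ∑ i ∈ Finset.range N, ibinom ((n : ℤ) - i) i = (Nat.fib (n + 1) : ℤ) := by
  rw [← Finset.sum_subset (Finset.range_subset_range.2 hN)
      (fun i _ hi => ibinom_neg (by
        rw [Finset.mem_range, not_lt] at hi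
        have : (n : ℤ) < i := by exact_mod_cast Nat.lt_of_lt_of_le (Nat.lt_succ_self n) hi
        omega) _)]
  rw [fib_sum]
  refine Finset.sum_congr rfl fun i hi => ?_
  rw [Finset.mem_range] at hi
  have h1 : (n : ℤ) - i = ((n - i : ℕ) : ℤ) := by omega
  rw [h1, ibinom_natCast]

/-- For `m ≥ 2`, `∑_{t=1}^m a_{m,t} = F_{m+2}`. -/
theorem sum_aCoeff_eq_fib (m : ℕ) (hm : 2 ≤ m) :
    ∑ t ∈ Finset.Icc 1 m, aCoeff (m : ℤ) (t : ℤ) = (Nat.fib (m + 2) : ℤ) := by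
  obtain ⟨n, rfl⟩ := Nat.exists_eq_add_of_le hm
  rw [← Finset.Ico_add_one_right_eq_Icc, Finset.sum_Ico_eq_sum_range]
  have hre : ∀ i ∈ Finset.range (2 + n + 1 - 1), aCoeff ((2 + n : ℕ) : ℤ) ((1 + i : ℕ) : ℤ)
      = ibinom (((n+1 : ℕ) : ℤ) - i) i + 2 * ibinom ((n : ℤ) - i) i
        + ibinom ((n : ℤ) - 1 - i) i := by
    intro i _
    unfold aCoeff
    push_cast
    ring_nf
  rw [Finset.sum_congr rfl hre]
  have hN : 2 + n + 1 - 1 = n + 2 := by omega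
  rw [hN]
  rw [Finset.sum_add_distrib, Finset.sum_add_distrib, ← Finset.mul_sum]
  rw [sum_ibinom (n + 1) (n + 2) (by omega), sum_ibinom n (n + 2) (by omega)]
  have h3 : ∑ i ∈ Finset.range (n + 2), ibinom ((n : ℤ) - 1 - i) i = (Nat.fib n : ℤ) := by
    rcases n with _ | k
    · refine Finset.sum_eq_zero fun i hi => ibinom_neg (by
        have : (0:ℤ) ≤ i := Int.ofNat_nonneg i
        omega) _ |>.trans (by simp)
    · have : ∀ i ∈ Finset.range (k + 3), ibinom (((k+1 : ℕ) : ℤ) - 1 - i) i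
          = ibinom ((k : ℕ) - (i:ℤ)) i := by
        intro i _; congr 1; push_cast; ring
      rw [Finset.sum_congr rfl this, sum_ibinom k (k + 3) (by omega)]
  rw [h3]
  have hfib : Nat.fib (2 + n + 2) = Nat.fib (n + 2) + 2 * Nat.fib (n + 1) + Nat.fib n := by
    have a : Nat.fib (n + 2) = Nat.fib n + Nat.fib (n + 1) := Nat.fib_add_two
    have b : Nat.fib (n + 3) = Nat.fib (n + 1) + Nat.fib (n + 2) := by
      rw [show n + 3 = (n + 1) + 2 by omega, Nat.fib_add_two]
    have c : Nat.fib (2 + n + 2) = Nat.fib (n + 2) + Nat.fib (n + 3) := by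
      rw [show 2 + n + 2 = (n + 2) + 2 by omega, Nat.fib_add_two]
    omega
  rw [hfib]; push_cast; ring
end

section
/- For integers m ≥ 1 and 1 ≤ t ≤ m, the number of binary strings of length m with no two consecutive ones whose zeros form exactly t maximal contiguous blocks equals binomial(m−t, t−1) + 2·binomial(m−t−1, t−1) + binomial(m−t−2, t−1). -/
/-- The number of maximal contiguous blocks of zeros (`false` entries) in a list of
booleans: a block starts at position `i` iff the entry there is `false` and either
`i = 0` or the previous entry is `true`. -/
def zeroBlocks (l : List Bool) : ℕ :=
  ((Finset.range l.length).filter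
    (fun i => l.getD i true = false ∧ (i = 0 ∨ l.getD (i - 1) true = true))).card

/- auxiliary -/
abbrev R (a b : Bool) : Prop := ¬(a = true ∧ b = true)

instance (S : Bool → Bool → Prop) [DecidableRel S] (a : Bool) (l : List Bool) :
    Decidable (List.Chain S a l) :=
  inferInstanceAs (Decidable (List.IsChain S (a :: l)))

instance (S : Bool → Bool → Prop) [DecidableRel S] (l : List Bool) :
    Decidable (List.Chain' S l) :=
  inferInstanceAs (Decidable (List.IsChain S l))

theorem chain_cons_old {α : Type*} {S : α → α → Prop} {a b : α} {l : List α} :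
    List.Chain S a (b :: l) ↔ S a b ∧ List.Chain S b l :=
  List.isChain_cons_cons

def E : ℕ → Finset (List Bool)
  | 0 => {[]}
  | n+1 => ((E n).image (List.cons true)) ∪ ((E n).image (List.cons false))

lemma mem_E {n : ℕ} {l : List Bool} : l ∈ E n ↔ l.length = n := by
  induction n generalizing l with
  | zero => cases l <;> simp [E]
  | succ n ih =>
    cases l with
    | nil => simp [E]
    | cons b l =>
      simp [E, ih]
      cases b <;> simp

def zbAux : Bool → List Bool → ℕ
  | _, [] => 0
  | prev, b :: l => (if b = false ∧ prev = true then 1 else 0) + zbAux b l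

lemma zb_eq (l : List Bool) (prev : Bool) :
    ((Finset.range l.length).filter
      (fun i => l.getD i true = false ∧
        (if i = 0 then prev else l.getD (i - 1) true) = true)).card = zbAux prev l := by
  induction l generalizing prev with
  | nil => simp [zbAux]
  | cons b l ih =>
    rw [Finset.card_filter, List.length_cons, Finset.sum_range_succ']
    have h1 : ∀ i : ℕ,
        (if ((b :: l).getD (i+1) true = false ∧
            (if i + 1 = 0 then prev else (b :: l).getD (i + 1 - 1) true) = true) then 1 else 0)
        = (if (l.getD i true = false ∧
            (if i = 0 then b else l.getD (i - 1) true) = true) then (1:ℕ) else 0) := by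
      intro i
      congr 1
      cases i with
      | zero => simp
      | succ j => simp [List.getD_cons_succ]
    simp only [h1]
    rw [← Finset.card_filter, ih b]
    simp [zbAux, Nat.add_comm]

lemma zeroBlocks_eq (l : List Bool) : zeroBlocks l = zbAux true l := by
  rw [zeroBlocks, ← zb_eq l true]
  congr 1
  apply Finset.filter_congr
  intro i _
  cases i <;> simp

lemma chain'_iff (l : List Bool) : List.Chain' R l ↔ List.Chain R false l := by
  cases l with
  | nil => simp [List.Chain', List.Chain]
  | cons b l => simp [List.Chain', List.Chain, List.isChain_cons_cons, R]

lemma card_cons_split (m : ℕ) (p : List Bool → Prop) [DecidablePred p] :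
    ((E (m+1)).filter p).card =
      ((E m).filter (fun l => p (true :: l))).card +
      ((E m).filter (fun l => p (false :: l))).card := by
  show ((((E m).image (List.cons true)) ∪ ((E m).image (List.cons false))).filter p).card = _
  rw [Finset.filter_union, Finset.card_union_of_disjoint, Finset.filter_image,
    Finset.filter_image, Finset.card_image_of_injective _ (fun a b h => by injection h),
    Finset.card_image_of_injective _ (fun a b h => by injection h)]
  · rw [Finset.disjoint_left]
    rintro a ha hb
    rw [Finset.mem_filter, Finset.mem_image] at ha hb
    obtain ⟨⟨x, -, rfl⟩, -⟩ := ha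
    obtain ⟨⟨y, -, h⟩, -⟩ := hb
    injection h with h1
    exact Bool.false_ne_true h1

def f (prev : Bool) (m t : ℕ) : ℕ :=
  ((E m).filter (fun l => List.Chain R prev l ∧ zbAux prev l = t)).card

lemma f_zero (prev : Bool) (t : ℕ) : f prev 0 t = if t = 0 then 1 else 0 := by
  unfold f
  show (({[]} : Finset (List Bool)).filter _).card = _
  rcases eq_or_ne t 0 with rfl | h <;>
    simp [zbAux, Finset.filter_singleton, List.Chain.nil, Ne.symm, *]

lemma f_succ_true (m t : ℕ) : f true (m+1) t = if t = 0 then 0 else f false m (t-1) := by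
  unfold f
  rw [card_cons_split]
  have e1 : (E m).filter (fun l => List.Chain R true (true :: l) ∧ zbAux true (true :: l) = t)
      = ∅ := by
    apply Finset.filter_false_of_mem
    intro l _ h
    rw [chain_cons_old] at h
    exact h.1.1 ⟨rfl, rfl⟩
  rw [e1, Finset.card_empty, Nat.zero_add]
  rcases eq_or_ne t 0 with rfl | h
  · rw [if_pos rfl, Finset.card_eq_zero]
    apply Finset.filter_false_of_mem
    intro l _ hc
    simp [zbAux] at hc
  · rw [if_neg h]
    congr 1
    apply Finset.filter_congr
    intro l _
    rw [chain_cons_old]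
    have hz' : zbAux true (false :: l) = 1 + zbAux false l := by simp [zbAux]
    rw [hz']
    constructor
    · rintro ⟨⟨-, hc⟩, hz⟩
      refine ⟨hc, ?_⟩
      omega
    · rintro ⟨hc, hz⟩
      refine ⟨⟨by simp [R], hc⟩, ?_⟩
      omega


lemma f_succ_false (m t : ℕ) : f false (m+1) t = f true m t + f false m t := by
  unfold f
  rw [card_cons_split]
  congr 1
  · congr 1
    apply Finset.filter_congr
    intro l _
    rw [chain_cons_old]
    have hz' : zbAux false (true :: l) = zbAux true l := by simp [zbAux]
    rw [hz']
    simp [R]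
  · congr 1
    apply Finset.filter_congr
    intro l _
    rw [chain_cons_old]
    have hz' : zbAux false (false :: l) = zbAux false l := by simp [zbAux]
    rw [hz']
    simp [R]

lemma ibinom_neg_left {u v : ℤ} (h : u < 0) : ibinom u v = 0 := by
  rw [ibinom, if_neg]; omega

lemma ibinom_zero {u : ℤ} (h : 0 ≤ u) : ibinom u 0 = 1 := by
  rw [ibinom, if_pos ⟨h, le_refl 0⟩]; simp

lemma ibinom_succ_succ (u v : ℤ) (hv : 0 ≤ v) :
    ibinom (u+1) (v+1) = ibinom u (v+1) + ibinom u v := by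
  unfold ibinom
  split_ifs with h1 h2 h3 h2 h3 <;> try omega
  · rw [show (u+1).toNat = u.toNat + 1 from by omega,
      show (v+1).toNat = v.toNat + 1 from by omega, Nat.choose_succ_succ]
    push_cast; ring
  · rw [show (u+1).toNat = 0 from by omega]
    rw [Nat.choose_eq_zero_of_lt (by omega)]
    simp

def Fc (m t : ℕ) : ℤ := ibinom ((m:ℤ) - t) t + ibinom ((m:ℤ) - t - 1) t

lemma Fc_step (m t : ℕ) : Fc m t + Fc (m+1) (t+1) = Fc (m+2) (t+1) := by
  unfold Fc
  rw [show ((t+1:ℕ):ℤ) = (t:ℤ) + 1 from by push_cast; ring,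
      show ((m+1:ℕ):ℤ) - ((t:ℤ)+1) = (m:ℤ) - t from by push_cast; ring,
      show ((m+2:ℕ):ℤ) - ((t:ℤ)+1) = ((m:ℤ) - t) + 1 from by push_cast; ring,
      show (m:ℤ) - t + 1 - 1 = ((m:ℤ) - t - 1) + 1 from by ring,
      ibinom_succ_succ _ _ (Int.natCast_nonneg t),
      ibinom_succ_succ _ _ (Int.natCast_nonneg t)]
  ring

lemma f_false_eq (m : ℕ) : ∀ t, (f false m t : ℤ) = Fc m t := by
  induction m using Nat.twoStepInduction with
  | zero =>
    intro t
    rw [f_zero]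
    rcases t with _ | t
    · norm_num [Fc, ibinom]
    · rw [Fc, ibinom_neg_left (by push_cast; omega),
        ibinom_neg_left (by push_cast; omega)]
      simp
  | one =>
    intro t
    rw [f_succ_false, f_zero, f_zero]
    rcases t with _ | t
    · norm_num [Fc, ibinom]
    · rcases t with _ | t
      · norm_num [Fc, ibinom]
      · rw [Fc, ibinom_neg_left (by push_cast; omega),
          ibinom_neg_left (by push_cast; omega)]
        simp
  | more m ih ih2 =>
    intro t
    rw [f_succ_false, f_succ_true]
    rcases t with _ | t
    · rw [if_pos rfl]
      push_cast
      rw [ih2 0, Fc, Fc]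
      push_cast
      rw [ibinom_zero (by omega), ibinom_zero (by omega), ibinom_zero (by omega),
        ibinom_zero (by omega)]
      ring
    · rw [if_neg (Nat.succ_ne_zero t)]
      push_cast
      rw [ih, ih2]
      exact Fc_step m t

/-- For `m ≥ 1` and `1 ≤ t ≤ m`, the number of binary strings of length `m` with no
two consecutive ones whose zeros form exactly `t` maximal contiguous blocks equals
`C(m-t, t-1) + 2·C(m-t-1, t-1) + C(m-t-2, t-1)`. -/
theorem card_strings_zeroBlocks (m t : ℕ) (hm : 1 ≤ m) (ht : 1 ≤ t) (htm : t ≤ m) :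
    (Nat.card {l : List Bool // l.length = m ∧
        List.Chain' (fun a b => ¬(a = true ∧ b = true)) l ∧
        zeroBlocks l = t} : ℤ) =
      ibinom ((m : ℤ) - t) (t - 1) + 2 * ibinom ((m : ℤ) - t - 1) (t - 1) +
        ibinom ((m : ℤ) - t - 2) (t - 1) := by
  obtain ⟨k, rfl⟩ : ∃ k, m = k + 1 := ⟨m - 1, by omega⟩
  have key : Nat.card {l : List Bool // l.length = k + 1 ∧
      List.Chain' (fun a b => ¬(a = true ∧ b = true)) l ∧ zeroBlocks l = t} =
      ((E (k+1)).filter (fun l =>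
        List.Chain' (fun a b => ¬(a = true ∧ b = true)) l ∧ zeroBlocks l = t)).card := by
    rw [← Nat.card_eq_finsetCard]
    refine Nat.card_congr (Equiv.subtypeEquivRight fun l => ?_)
    simp only [Finset.mem_filter, mem_E]
  have hs : ((E (k+1)).filter (fun l =>
      List.Chain' (fun a b => ¬(a = true ∧ b = true)) l ∧ zeroBlocks l = t)).card =
      f true k t + f false k (t-1) := by
    rw [card_cons_split]
    congr 1
    · unfold f
      congr 1
      apply Finset.filter_congr
      intro l _
      rw [chain'_iff, chain_cons_old, zeroBlocks_eq]
      have hz : zbAux true (true :: l) = zbAux true l := by simp [zbAux]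
      rw [hz]
      simp [R]
    · unfold f
      congr 1
      apply Finset.filter_congr
      intro l _
      rw [chain'_iff, chain_cons_old, zeroBlocks_eq]
      have hz : zbAux true (false :: l) = 1 + zbAux false l := by simp [zbAux]
      rw [hz]
      constructor
      · rintro ⟨⟨-, hc⟩, hz2⟩
        exact ⟨hc, by omega⟩
      · rintro ⟨hc, hz2⟩
        exact ⟨⟨by simp [R], hc⟩, by omega⟩
  rw [key, hs]
  rcases k with _ | j
  · have : t = 1 := by omega
    subst this
    rw [f_zero, f_zero]
    norm_num [ibinom]
  · rw [f_succ_true, if_neg (by omega)]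
    push_cast
    rw [f_false_eq, f_false_eq]
    unfold Fc
    rw [show ((t-1:ℕ):ℤ) = (t:ℤ) - 1 from by omega]
    push_cast
    rw [show (j:ℤ) - ((t:ℤ)-1) = (j:ℤ) - t + 1 from by ring,
        show (j:ℤ) - t + 1 - 1 = (j:ℤ) - t from by ring,
        show (j:ℤ) + 1 - ((t:ℤ)-1) = (j:ℤ) - t + 2 from by ring,
        show (j:ℤ) - t + 2 - 1 = (j:ℤ) - t + 1 from by ring,
        show (j:ℤ) + 1 + 1 - (t:ℤ) = (j:ℤ) - t + 2 from by ring,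
        show (j:ℤ) - t + 2 - 2 = (j:ℤ) - t from by ring]
    ring
end
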